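/- arXiv:1404.3622 — 2 statements merged into one kernel-verified Lean document; each statement's English description precedes it below -/
import Mathlib

section
/- For a 3×3 integer matrix A with nonzero determinant, one has d_k(A)² ∣ d_{k−1}(A)·d_{k+1}(A) for k = 1, 2, with the convention d₀(A) = 1. -/
/-- The `k`-th determinantal divisor of a 3×3 integer matrix: the (nonnegative)
gcd of all `k × k` determinantal minors. -/
def detDiv (A : Matrix (Fin 3) (Fin 3) ℤ) (k : ℕ) : ℤ :=
  Finset.gcd Finset.univ
    (fun p : (Fin k → Fin 3) × (Fin k → Fin 3) => (A.submatrix p.1 p.2).det)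

lemma detDiv_dvd_minor (A : Matrix (Fin 3) (Fin 3) ℤ) (k : ℕ)
    (p q : Fin k → Fin 3) : detDiv A k ∣ (A.submatrix p q).det :=
  Finset.gcd_dvd (Finset.mem_univ (p, q))

lemma detDiv_one_dvd_entry (A : Matrix (Fin 3) (Fin 3) ℤ) (i j : Fin 3) :
    detDiv A 1 ∣ A i j := by
  have h := detDiv_dvd_minor A 1 (fun _ => i) (fun _ => j)
  simpa [Matrix.det_fin_one] using h

lemma detDiv_two_dvd_adjugate (A : Matrix (Fin 3) (Fin 3) ℤ) (i j : Fin 3) :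
    detDiv A 2 ∣ A.adjugate i j := by
  rw [Matrix.adjugate_fin_succ_eq_det_submatrix]
  exact Dvd.dvd.mul_left (detDiv_dvd_minor A 2 j.succAbove i.succAbove) _

lemma sq_dvd_adjugate (g : ℤ) (M : Matrix (Fin 3) (Fin 3) ℤ)
    (h : ∀ i j, g ∣ M i j) (i j : Fin 3) : g ^ 2 ∣ M.adjugate i j := by
  rw [Matrix.adjugate_fin_succ_eq_det_submatrix, Matrix.det_fin_two, sq]
  exact Dvd.dvd.mul_left
    (dvd_sub (mul_dvd_mul (h _ _) (h _ _)) (mul_dvd_mul (h _ _) (h _ _))) _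

lemma det_dvd_detDiv_three (A : Matrix (Fin 3) (Fin 3) ℤ) :
    A.det ∣ detDiv A 3 := by
  apply Finset.dvd_gcd
  rintro ⟨p, q⟩ -
  by_cases hp : Function.Injective p
  · by_cases hq : Function.Injective q
    · have hpb : Function.Bijective p := (Finite.injective_iff_bijective).mp hp
      have hqb : Function.Bijective q := (Finite.injective_iff_bijective).mp hq
      set σ : Equiv.Perm (Fin 3) := Equiv.ofBijective p hpb
      set τ : Equiv.Perm (Fin 3) := Equiv.ofBijective q hqb
      have hps : p = ⇑σ := rfl
      have hqs : q = ⇑τ := rfl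
      have : A.submatrix p q = (A.submatrix id ⇑τ).submatrix ⇑σ id := by
        rw [Matrix.submatrix_submatrix]; rfl
      rw [this, Matrix.det_permute, Matrix.det_permute']
      exact Dvd.dvd.mul_left (Dvd.dvd.mul_left dvd_rfl _) _
    · -- repeated columns
      rw [Function.not_injective_iff] at hq
      obtain ⟨a, b, hab, hne⟩ := hq
      have h0 : (A.submatrix p q).det = 0 :=
        Matrix.det_zero_of_column_eq hne
          (fun k => by simp [Matrix.submatrix_apply, hab])
      simp only [h0]
      exact dvd_zero _
  · -- repeated rows
    rw [Function.not_injective_iff] at hp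
    obtain ⟨a, b, hab, hne⟩ := hp
    have h0 : (A.submatrix p q).det = 0 :=
      Matrix.det_zero_of_row_eq hne
        (by ext k; simp [Matrix.submatrix_apply, hab])
    simp only [h0]
    exact dvd_zero _

/-- For a 3×3 integer matrix `A` with nonzero determinant,
`d_k(A)² ∣ d_{k−1}(A)·d_{k+1}(A)` for `k = 1, 2` (with `d₀(A) = 1`). -/
theorem detDiv_sq_dvd (A : Matrix (Fin 3) (Fin 3) ℤ) (hA : A.det ≠ 0)
    (k : ℕ) (hk : k = 1 ∨ k = 2) :
    (detDiv A k) ^ 2 ∣ detDiv A (k - 1) * detDiv A (k + 1) := by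
  rcases hk with rfl | rfl
  · -- d₁² ∣ d₀ · d₂ : each 2×2 minor is a combination of products of two entries
    have h2 : detDiv A 1 ^ 2 ∣ detDiv A 2 := by
      apply Finset.dvd_gcd
      rintro ⟨p, q⟩ -
      rw [Matrix.det_fin_two, sq]
      exact dvd_sub
        (mul_dvd_mul (detDiv_one_dvd_entry A _ _) (detDiv_one_dvd_entry A _ _))
        (mul_dvd_mul (detDiv_one_dvd_entry A _ _) (detDiv_one_dvd_entry A _ _))
    exact h2.trans (Dvd.dvd.mul_left dvd_rfl _)
  · -- d₂² ∣ d₁ · d₃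
    -- Step 1: d₂² divides every entry of adjugate (adjugate A) = det A • A
    have hadj : ∀ i j : Fin 3, detDiv A 2 ^ 2 ∣ A.det * A i j := by
      intro i j
      have h := sq_dvd_adjugate (detDiv A 2) A.adjugate
        (detDiv_two_dvd_adjugate A) i j
      rwa [Matrix.adjugate_adjugate A (by simp), Fintype.card_fin,
        pow_one, Matrix.smul_apply, smul_eq_mul] at h
    -- Step 2: hence d₂² ∣ |det A| * d₁
    have h1 : detDiv A 2 ^ 2 ∣ normalize A.det * detDiv A 1 := by
      have : normalize A.det * detDiv A 1 =
          Finset.gcd Finset.univ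
            (fun p : (Fin 1 → Fin 3) × (Fin 1 → Fin 3) =>
              A.det * (A.submatrix p.1 p.2).det) := by
        rw [Finset.gcd_mul_left]; rfl
      rw [this]
      apply Finset.dvd_gcd
      rintro ⟨p, q⟩ -
      rw [Matrix.det_fin_one]
      exact hadj _ _
    -- Step 3: |det A| ∣ d₃, so |det A| * d₁ ∣ d₁ * d₃
    have h3 : (normalize A.det : ℤ) ∣ detDiv A 3 := by
      have := det_dvd_detDiv_three A
      rwa [← Int.abs_eq_normalize, abs_dvd]
    calc detDiv A 2 ^ 2 ∣ normalize A.det * detDiv A 1 := h1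
      _ ∣ detDiv A 1 * detDiv A 3 := by
          rw [mul_comm]
          exact mul_dvd_mul_left _ h3
end

section
/- Let θ(U,V) = ((e^{V+L} − 1)(e^{U+L−V} − 1)(e^{L−U} − 1))^{−1/2} on the open region R_L = {(U,V) : −2L < U < L, −L < V < U + L} for a parameter L > 0. Then θ is positive and finite everywhere on R_L, and θ is integrable on R_L. -/
open MeasureTheory Set

/-- `t ↦ 1/√(t-c)` is integrable on any bounded interval. -/
lemma integrableOn_one_div_sqrt_sub (c a b : ℝ) :
    IntegrableOn (fun t : ℝ => 1 / Real.sqrt (t - c)) (Set.Ioo a b) volume := by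
  have hsub : Set.Ioo a b ⊆ (Set.Ioo a b ∩ Set.Iic c) ∪ Set.Ioc c b := by
    intro t ht
    rcases le_or_gt t c with h | h
    · exact Or.inl ⟨ht, h⟩
    · exact Or.inr ⟨h, ht.2.le⟩
  refine IntegrableOn.mono_set (IntegrableOn.union ?_ ?_) hsub
  · have heq : Set.EqOn (fun t : ℝ => 1 / Real.sqrt (t - c)) 0 (Set.Ioo a b ∩ Set.Iic c) := by
      intro t ht
      have h0 : t - c ≤ 0 := by
        have := ht.2
        simp only [Set.mem_Iic] at this
        linarith
      simp [Real.sqrt_eq_zero'.mpr h0]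
    rw [integrableOn_congr_fun heq (measurableSet_Ioo.inter measurableSet_Iic)]
    exact integrableOn_zero
  · rcases le_or_gt b c with hbc | hcb
    · rw [Set.Ioc_eq_empty (by intro h; linarith)]
      exact integrableOn_empty
    · have h1 : IntervalIntegrable (fun x : ℝ => x ^ (-(1/2) : ℝ)) volume 0 (b - c) :=
        intervalIntegral.intervalIntegrable_rpow' (by norm_num)
      have h2 := h1.comp_sub_right c
      rw [zero_add, sub_add_cancel] at h2
      have h3 : IntegrableOn (fun x : ℝ => (x - c) ^ (-(1/2) : ℝ)) (Set.Ioc c b) volume :=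
        (intervalIntegrable_iff_integrableOn_Ioc_of_le hcb.le).mp h2
      have heq : Set.EqOn (fun t : ℝ => 1 / Real.sqrt (t - c))
          (fun x : ℝ => (x - c) ^ (-(1/2) : ℝ)) (Set.Ioc c b) := by
        intro t ht
        have h0 : 0 < t - c := by
          have := ht.1; linarith
        simp only
        rw [Real.rpow_neg (le_of_lt h0), Real.sqrt_eq_rpow, one_div]
      rw [integrableOn_congr_fun heq measurableSet_Ioc]
      exact h3

/-- `t ↦ 1/√(c-t)` is integrable on any bounded interval. -/
lemma integrableOn_one_div_sqrt_sub' (c a b : ℝ) :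
    IntegrableOn (fun t : ℝ => 1 / Real.sqrt (c - t)) (Set.Ioo a b) volume := by
  have hsub : Set.Ioo a b ⊆ (Set.Ioo a b ∩ Set.Ici c) ∪ Set.Ioc a c := by
    intro t ht
    rcases le_or_gt c t with h | h
    · exact Or.inl ⟨ht, h⟩
    · exact Or.inr ⟨ht.1, h.le⟩
  refine IntegrableOn.mono_set (IntegrableOn.union ?_ ?_) hsub
  · have heq : Set.EqOn (fun t : ℝ => 1 / Real.sqrt (c - t)) 0 (Set.Ioo a b ∩ Set.Ici c) := by
      intro t ht
      have h0 : c - t ≤ 0 := by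
        have := ht.2
        simp only [Set.mem_Ici] at this
        linarith
      simp [Real.sqrt_eq_zero'.mpr h0]
    rw [integrableOn_congr_fun heq (measurableSet_Ioo.inter measurableSet_Ici)]
    exact integrableOn_zero
  · rcases le_or_gt c a with hca | hac
    · rw [Set.Ioc_eq_empty (by intro h; linarith)]
      exact integrableOn_empty
    · have h1 : IntervalIntegrable (fun x : ℝ => x ^ (-(1/2) : ℝ)) volume 0 (c - a) :=
        intervalIntegral.intervalIntegrable_rpow' (by norm_num)
      have h2 := h1.comp_sub_left c
      rw [sub_zero, sub_sub_cancel] at h2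
      have h3 : IntegrableOn (fun x : ℝ => (c - x) ^ (-(1/2) : ℝ)) (Set.Ioc a c) volume :=
        (intervalIntegrable_iff_integrableOn_Ioc_of_le hac.le).mp h2.symm
      have heq : Set.EqOn (fun t : ℝ => 1 / Real.sqrt (c - t))
          (fun x : ℝ => (c - x) ^ (-(1/2) : ℝ)) (Set.Ioc a c) := by
        intro t ht
        have h0 : 0 ≤ c - t := by
          have := ht.2; linarith
        rcases eq_or_lt_of_le h0 with h | h
        · simp only [← h]
          rw [Real.zero_rpow (by norm_num), Real.sqrt_zero, div_zero]
        · simp only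
          rw [Real.rpow_neg h0, Real.sqrt_eq_rpow, one_div]
      rw [integrableOn_congr_fun heq measurableSet_Ioc]
      exact h3

lemma integral_one_div_sqrt {d : ℝ} (hd : 0 ≤ d) :
    ∫ t in (0:ℝ)..d, 1 / Real.sqrt t = 2 * Real.sqrt d := by
  have heq : Set.EqOn (fun t : ℝ => 1 / Real.sqrt t) (fun t : ℝ => t ^ (-(1/2) : ℝ))
      (Set.uIcc 0 d) := by
    intro t ht
    rw [Set.uIcc_of_le hd] at ht
    rcases eq_or_lt_of_le ht.1 with h | h
    · simp only [← h]
      rw [Real.zero_rpow (by norm_num), Real.sqrt_zero, div_zero]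
    · simp only
      rw [Real.rpow_neg h.le, Real.sqrt_eq_rpow, one_div]
  rw [intervalIntegral.integral_congr heq,
    integral_rpow (Or.inl (by norm_num : (-1:ℝ) < -(1/2)))]
  rw [show (-(1/2) : ℝ) + 1 = 1/2 by norm_num, Real.zero_rpow (by norm_num : (1/2 : ℝ) ≠ 0),
    Real.sqrt_eq_rpow]
  ring

/-- min-trick: `1/√(xy) ≤ √2/√(x+y) · (1/√x + 1/√y)`. -/
lemma one_div_sqrt_mul_le {x y : ℝ} (hx : 0 < x) (hy : 0 < y) :
    1 / Real.sqrt (x * y) ≤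
      Real.sqrt 2 / Real.sqrt (x + y) * (1 / Real.sqrt x + 1 / Real.sqrt y) := by
  wlog h : x ≤ y generalizing x y
  · have := this hy hx (le_of_not_ge h)
    rw [mul_comm y x, add_comm y x] at this
    calc 1 / Real.sqrt (x * y) ≤
        Real.sqrt 2 / Real.sqrt (x + y) * (1 / Real.sqrt y + 1 / Real.sqrt x) := this
      _ = Real.sqrt 2 / Real.sqrt (x + y) * (1 / Real.sqrt x + 1 / Real.sqrt y) := by ring
  have hsx : 0 < Real.sqrt x := Real.sqrt_pos.mpr hx
  have hsy : 0 < Real.sqrt y := Real.sqrt_pos.mpr hy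
  have hsxy : 0 < Real.sqrt (x + y) := Real.sqrt_pos.mpr (by linarith)
  have h1 : Real.sqrt (x + y) ≤ Real.sqrt 2 * Real.sqrt y := by
    rw [← Real.sqrt_mul (by norm_num : (0:ℝ) ≤ 2)]
    exact Real.sqrt_le_sqrt (by linarith)
  have h2 : 1 / Real.sqrt y ≤ Real.sqrt 2 / Real.sqrt (x + y) := by
    rw [div_le_div_iff₀ hsy hsxy]
    calc 1 * Real.sqrt (x + y) = Real.sqrt (x + y) := one_mul _
      _ ≤ Real.sqrt 2 * Real.sqrt y := h1
  have key : 1 / Real.sqrt (x * y) ≤ Real.sqrt 2 / Real.sqrt (x + y) * (1 / Real.sqrt x) := by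
    rw [Real.sqrt_mul hx.le]
    calc 1 / (Real.sqrt x * Real.sqrt y) = (1 / Real.sqrt y) * (1 / Real.sqrt x) := by
          rw [one_div, one_div, one_div, mul_inv, mul_comm]
      _ ≤ Real.sqrt 2 / Real.sqrt (x + y) * (1 / Real.sqrt x) :=
          mul_le_mul_of_nonneg_right h2 (by positivity)
  calc 1 / Real.sqrt (x * y) ≤ Real.sqrt 2 / Real.sqrt (x + y) * (1 / Real.sqrt x) := key
    _ ≤ Real.sqrt 2 / Real.sqrt (x + y) * (1 / Real.sqrt x + 1 / Real.sqrt y) :=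
        mul_le_mul_of_nonneg_left (le_add_of_nonneg_right (by positivity)) (by positivity)

/-- The pointwise domination of θ by a separable-in-the-inner-variable bound. -/
lemma theta_le_bound (L U V : ℝ) (hU1 : -2*L < U) (hU2 : U < L)
    (hV1 : -L < V) (hV2 : V < U + L) :
    1 / Real.sqrt ((Real.exp (V + L) - 1) * (Real.exp (U + L - V) - 1)
        * (Real.exp (L - U) - 1)) ≤
      Real.sqrt 2 / Real.sqrt (U + 2*L) * (1 / Real.sqrt (V + L) + 1 / Real.sqrt (U + L - V))
        * (1 / Real.sqrt (L - U)) := by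
  have hx : 0 < V + L := by linarith
  have hy : 0 < U + L - V := by linarith
  have hc : 0 < L - U := by linarith
  have e1 : V + L ≤ Real.exp (V + L) - 1 := by linarith [Real.add_one_le_exp (V + L)]
  have e2 : U + L - V ≤ Real.exp (U + L - V) - 1 := by
    linarith [Real.add_one_le_exp (U + L - V)]
  have e3 : L - U ≤ Real.exp (L - U) - 1 := by linarith [Real.add_one_le_exp (L - U)]
  have hE1 : 0 < Real.exp (V + L) - 1 := lt_of_lt_of_le hx e1
  have hE2 : 0 < Real.exp (U + L - V) - 1 := lt_of_lt_of_le hy e2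
  have hE3 : 0 < Real.exp (L - U) - 1 := lt_of_lt_of_le hc e3
  have hprod : (V + L) * (U + L - V) * (L - U) ≤
      (Real.exp (V + L) - 1) * (Real.exp (U + L - V) - 1) * (Real.exp (L - U) - 1) := by
    apply mul_le_mul _ e3 hc.le (by positivity)
    exact mul_le_mul e1 e2 hy.le hE1.le
  have step1 : 1 / Real.sqrt ((Real.exp (V + L) - 1) * (Real.exp (U + L - V) - 1)
      * (Real.exp (L - U) - 1)) ≤ 1 / Real.sqrt ((V + L) * (U + L - V) * (L - U)) := by
    apply one_div_le_one_div_of_le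
    · apply Real.sqrt_pos.mpr; positivity
    · exact Real.sqrt_le_sqrt hprod
  have step2 : 1 / Real.sqrt ((V + L) * (U + L - V) * (L - U)) =
      1 / Real.sqrt ((V + L) * (U + L - V)) * (1 / Real.sqrt (L - U)) := by
    rw [Real.sqrt_mul (by positivity) (L - U)]
    rw [one_div, one_div, one_div, mul_inv]
  have step3 : 1 / Real.sqrt ((V + L) * (U + L - V)) ≤
      Real.sqrt 2 / Real.sqrt (U + 2*L) * (1 / Real.sqrt (V + L) + 1 / Real.sqrt (U + L - V)) := by
    have := one_div_sqrt_mul_le hx hy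
    rw [show V + L + (U + L - V) = U + 2*L by ring] at this
    exact this
  calc 1 / Real.sqrt ((Real.exp (V + L) - 1) * (Real.exp (U + L - V) - 1)
      * (Real.exp (L - U) - 1)) ≤ 1 / Real.sqrt ((V + L) * (U + L - V) * (L - U)) := step1
    _ = 1 / Real.sqrt ((V + L) * (U + L - V)) * (1 / Real.sqrt (L - U)) := step2
    _ ≤ Real.sqrt 2 / Real.sqrt (U + 2*L) * (1 / Real.sqrt (V + L) + 1 / Real.sqrt (U + L - V))
        * (1 / Real.sqrt (L - U)) :=
        mul_le_mul_of_nonneg_right step3 (by positivity)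

/-- The bound integrates (in `V`) to `4√2/√(L-U)`. -/
lemma integral_bound_eq (L U : ℝ) (hU1 : -2*L < U) (hU2 : U < L) :
    ∫ V in Set.Ioo (-L) (U + L),
      (Real.sqrt 2 / Real.sqrt (U + 2*L) * (1 / Real.sqrt (V + L) + 1 / Real.sqrt (U + L - V))
        * (1 / Real.sqrt (L - U)))
      = 4 * Real.sqrt 2 * (1 / Real.sqrt (L - U)) := by
  have ha : (0:ℝ) < U + 2*L := by linarith
  rw [MeasureTheory.integral_mul_const, MeasureTheory.integral_const_mul]
  have h1 : IntegrableOn (fun V : ℝ => 1 / Real.sqrt (V + L)) (Set.Ioo (-L) (U + L)) volume := by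
    have := integrableOn_one_div_sqrt_sub (-L) (-L) (U + L)
    simpa [sub_neg_eq_add] using this
  have h2 : IntegrableOn (fun V : ℝ => 1 / Real.sqrt (U + L - V)) (Set.Ioo (-L) (U + L)) volume :=
    integrableOn_one_div_sqrt_sub' (U + L) (-L) (U + L)
  rw [MeasureTheory.integral_add h1 h2]
  have hab : (-L : ℝ) ≤ U + L := by linarith
  have E1 : ∫ V in Set.Ioo (-L) (U + L), 1 / Real.sqrt (V + L) = 2 * Real.sqrt (U + 2*L) := by
    rw [← MeasureTheory.integral_Ioc_eq_integral_Ioo, ← intervalIntegral.integral_of_le hab]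
    have := intervalIntegral.integral_comp_add_right (a := -L) (b := U + L)
      (fun t : ℝ => 1 / Real.sqrt t) L
    rw [this, show (-L + L : ℝ) = 0 by ring, show (U + L + L : ℝ) = U + 2*L by ring]
    exact integral_one_div_sqrt ha.le
  have E2 : ∫ V in Set.Ioo (-L) (U + L), 1 / Real.sqrt (U + L - V)
      = 2 * Real.sqrt (U + 2*L) := by
    rw [← MeasureTheory.integral_Ioc_eq_integral_Ioo, ← intervalIntegral.integral_of_le hab]
    have := intervalIntegral.integral_comp_sub_left (a := -L) (b := U + L)
      (fun t : ℝ => 1 / Real.sqrt t) (U + L)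
    rw [this, show (U + L - (U + L) : ℝ) = 0 by ring,
      show (U + L - -L : ℝ) = U + 2*L by ring]
    exact integral_one_div_sqrt ha.le
  rw [E1, E2]
  have hsa : Real.sqrt (U + 2*L) ≠ 0 := ne_of_gt (Real.sqrt_pos.mpr ha)
  rw [show (2 * Real.sqrt (U + 2*L) + 2 * Real.sqrt (U + 2*L))
      = 4 * Real.sqrt (U + 2*L) by ring]
  rw [div_mul_eq_mul_div, show Real.sqrt 2 * (4 * Real.sqrt (U + 2*L))
      = 4 * Real.sqrt 2 * Real.sqrt (U + 2*L) by ring,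
    mul_div_assoc, div_self hsa, mul_one]

/-- On `R_L = {(U,V) : −2L < U < L, −L < V < U+L}` the function
`θ(U,V) = ((e^{V+L}−1)(e^{U+L−V}−1)(e^{L−U}−1))^{−1/2}` is positive and finite
(the quantity under the square root is positive), and `θ` is integrable on
`R_L`. -/
theorem theta_pos_integrable (L : ℝ) (hL : 0 < L) :
    let R : Set (ℝ × ℝ) :=
      {p | -2 * L < p.1 ∧ p.1 < L ∧ -L < p.2 ∧ p.2 < p.1 + L}
    let θ : ℝ × ℝ → ℝ := fun p =>
      1 / Real.sqrt ((Real.exp (p.2 + L) - 1) * (Real.exp (p.1 + L - p.2) - 1)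
        * (Real.exp (L - p.1) - 1))
    (∀ p ∈ R, 0 < (Real.exp (p.2 + L) - 1) * (Real.exp (p.1 + L - p.2) - 1)
        * (Real.exp (L - p.1) - 1)) ∧
    (∀ p ∈ R, 0 < θ p) ∧
    IntegrableOn θ R volume := by
  intro R θ
  have hmem : ∀ p : ℝ × ℝ, p ∈ R ↔ (-2*L < p.1 ∧ p.1 < L ∧ -L < p.2 ∧ p.2 < p.1 + L) :=
    fun p => Iff.rfl
  have hq : ∀ p ∈ R, 0 < (Real.exp (p.2 + L) - 1) * (Real.exp (p.1 + L - p.2) - 1)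
      * (Real.exp (L - p.1) - 1) := by
    intro p hp
    obtain ⟨h1, h2, h3, h4⟩ := (hmem p).mp hp
    have e1 : 0 < Real.exp (p.2 + L) - 1 := by
      have := Real.add_one_le_exp (p.2 + L); nlinarith
    have e2 : 0 < Real.exp (p.1 + L - p.2) - 1 := by
      have := Real.add_one_le_exp (p.1 + L - p.2); nlinarith
    have e3 : 0 < Real.exp (L - p.1) - 1 := by
      have := Real.add_one_le_exp (L - p.1); nlinarith
    positivity
  refine ⟨hq, ?_, ?_⟩
  · intro p hp
    have := hq p hp
    have : 0 < Real.sqrt ((Real.exp (p.2 + L) - 1) * (Real.exp (p.1 + L - p.2) - 1)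
        * (Real.exp (L - p.1) - 1)) := Real.sqrt_pos.mpr this
    exact one_div_pos.mpr this
  · -- integrability
    have hθnn : ∀ p : ℝ × ℝ, 0 ≤ θ p := fun p => by positivity
    have hθm : Measurable θ := by
      apply Measurable.div measurable_const
      apply Real.continuous_sqrt.measurable.comp
      fun_prop
    have hRm : MeasurableSet R := by
      have h1 : MeasurableSet {p : ℝ × ℝ | -2*L < p.1} :=
        measurableSet_lt measurable_const measurable_fst
      have h2 : MeasurableSet {p : ℝ × ℝ | p.1 < L} :=
        measurableSet_lt measurable_fst measurable_const
      have h3 : MeasurableSet {p : ℝ × ℝ | -L < p.2} :=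
        measurableSet_lt measurable_const measurable_snd
      have h4 : MeasurableSet {p : ℝ × ℝ | p.2 < p.1 + L} :=
        measurableSet_lt measurable_snd (measurable_fst.add_const L)
      have : R = {p : ℝ × ℝ | -2*L < p.1} ∩ ({p : ℝ × ℝ | p.1 < L}
          ∩ ({p : ℝ × ℝ | -L < p.2} ∩ {p : ℝ × ℝ | p.2 < p.1 + L})) := rfl
      rw [this]
      exact h1.inter (h2.inter (h3.inter h4))
    rw [← integrable_indicator_iff hRm]
    rw [MeasureTheory.Measure.volume_eq_prod]
    have hfm : AEStronglyMeasurable (R.indicator θ)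
        ((volume : Measure ℝ).prod (volume : Measure ℝ)) :=
      (hθm.indicator hRm).aestronglyMeasurable
    rw [MeasureTheory.integrable_prod_iff hfm]
    -- useful facts for a fixed U in the base interval
    have hsec : ∀ U ∈ Set.Ioo (-2*L) L, (fun V => R.indicator θ (U, V)) =
        (Set.Ioo (-L) (U + L)).indicator (fun V => θ (U, V)) := by
      intro U hU
      funext V
      by_cases hV : V ∈ Set.Ioo (-L) (U + L)
      · rw [Set.indicator_of_mem hV,
          Set.indicator_of_mem (show (U, V) ∈ R from ⟨hU.1, hU.2, hV.1, hV.2⟩)]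
      · rw [Set.indicator_of_notMem hV, Set.indicator_of_notMem]
        intro hmemR
        exact hV ⟨hmemR.2.2.1, hmemR.2.2.2⟩
    have hGint : ∀ U ∈ Set.Ioo (-2*L) L, IntegrableOn
        (fun V : ℝ => Real.sqrt 2 / Real.sqrt (U + 2*L)
          * (1 / Real.sqrt (V + L) + 1 / Real.sqrt (U + L - V)) * (1 / Real.sqrt (L - U)))
        (Set.Ioo (-L) (U + L)) volume := by
      intro U _
      have h1 : IntegrableOn (fun V : ℝ => 1 / Real.sqrt (V + L))
          (Set.Ioo (-L) (U + L)) volume := by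
        have := integrableOn_one_div_sqrt_sub (-L) (-L) (U + L)
        simpa [sub_neg_eq_add] using this
      have h2 : IntegrableOn (fun V : ℝ => 1 / Real.sqrt (U + L - V))
          (Set.Ioo (-L) (U + L)) volume :=
        integrableOn_one_div_sqrt_sub' (U + L) (-L) (U + L)
      exact (((h1.add h2).const_mul _).mul_const _)
    have hsecInt : ∀ U ∈ Set.Ioo (-2*L) L,
        IntegrableOn (fun V => θ (U, V)) (Set.Ioo (-L) (U + L)) volume := by
      intro U hU
      refine Integrable.mono (hGint U hU)
        ((hθm.comp measurable_prodMk_left).aestronglyMeasurable.restrict) ?_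
      rw [ae_restrict_iff' measurableSet_Ioo]
      refine Filter.Eventually.of_forall (fun V hV => ?_)
      rw [Real.norm_of_nonneg (hθnn _), Real.norm_of_nonneg (by positivity)]
      exact theta_le_bound L U V hU.1 hU.2 hV.1 hV.2
    constructor
    · refine Filter.Eventually.of_forall (fun U => ?_)
      by_cases hU : U ∈ Set.Ioo (-2*L) L
      · rw [hsec U hU, integrable_indicator_iff measurableSet_Ioo]
        exact hsecInt U hU
      · have : (fun V => R.indicator θ (U, V)) = fun _ => (0:ℝ) := by
          funext V
          apply Set.indicator_of_notMem
          intro hmemR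
          exact hU ⟨hmemR.1, hmemR.2.1⟩
        rw [this]
        exact integrable_zero _ _ _
    · -- integrability of the integral of norms
      have hMint : Integrable ((Set.Ioo (-2*L) L).indicator
          (fun U => 4 * Real.sqrt 2 * (1 / Real.sqrt (L - U)))) volume := by
        rw [integrable_indicator_iff measurableSet_Ioo]
        exact (integrableOn_one_div_sqrt_sub' L (-2*L) L).const_mul _
      refine Integrable.mono hMint (hfm.norm.integral_prod_right') ?_
      refine Filter.Eventually.of_forall (fun U => ?_)
      by_cases hU : U ∈ Set.Ioo (-2*L) L
      · have hval : ∫ V, ‖R.indicator θ (U, V)‖ =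
            ∫ V in Set.Ioo (-L) (U + L), θ (U, V) := by
          have : (fun V => ‖R.indicator θ (U, V)‖) =
              (Set.Ioo (-L) (U + L)).indicator (fun V => θ (U, V)) := by
            funext V
            rw [show R.indicator θ (U, V) = (Set.Ioo (-L) (U + L)).indicator
              (fun V => θ (U, V)) V from congrFun (hsec U hU) V]
            exact Real.norm_of_nonneg (Set.indicator_nonneg (fun x _ => hθnn _) V)
          rw [this, MeasureTheory.integral_indicator measurableSet_Ioo]
        rw [hval]
        have hle : ∫ V in Set.Ioo (-L) (U + L), θ (U, V) ≤
            4 * Real.sqrt 2 * (1 / Real.sqrt (L - U)) := by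
          calc ∫ V in Set.Ioo (-L) (U + L), θ (U, V)
              ≤ ∫ V in Set.Ioo (-L) (U + L),
                (Real.sqrt 2 / Real.sqrt (U + 2*L)
                  * (1 / Real.sqrt (V + L) + 1 / Real.sqrt (U + L - V))
                  * (1 / Real.sqrt (L - U))) := by
                refine setIntegral_mono_on (hsecInt U hU) (hGint U hU) measurableSet_Ioo ?_
                intro V hV
                exact theta_le_bound L U V hU.1 hU.2 hV.1 hV.2
            _ = 4 * Real.sqrt 2 * (1 / Real.sqrt (L - U)) :=
                integral_bound_eq L U hU.1 hU.2
        have hnn : 0 ≤ ∫ V in Set.Ioo (-L) (U + L), θ (U, V) :=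
          integral_nonneg (fun V => hθnn _)
        rw [Real.norm_of_nonneg hnn, Set.indicator_of_mem hU,
          Real.norm_of_nonneg (by positivity)]
        exact hle
      · have hz : (fun V => R.indicator θ (U, V)) = fun _ => (0:ℝ) := by
          funext V
          apply Set.indicator_of_notMem
          intro hmemR
          exact hU ⟨hmemR.1, hmemR.2.1⟩
        have : ∫ V, ‖R.indicator θ (U, V)‖ = 0 := by
          rw [show (fun V => ‖R.indicator θ (U, V)‖) = fun _ => (0:ℝ) by
            funext V; rw [congrFun hz V]; simp]
          simp
        rw [this, Set.indicator_of_notMem hU]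
end
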